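/- A continuous function f : U → R defined on an open subset U of a finite-dimensional normed space that is a continuous selection of finitely many continuously differentiable functions f_1,...,f_k (i.e., for every x ∈ U there is an index i with f(x) = f_i(x)) is locally Lipschitz continuous on U. Consequently, the generalized cap discrepancy Λ, being continuous and locally a selection of the C^1 functions φ̃_I^{(s)} around a generic point set X̄, is Lipschitz continuous on a neighborhood of X̄. -/

import Mathlib

/-!
A continuous selection `f` of `C¹` functions `g i` is locally Lipschitz: near a point `p`,
continuity only lets `f` agree with those `g i` that already agree with `f` at `p`, so
`‖f q - f p‖ ≤ K ‖q - p‖` for `q` near `p`; a Dini-derivative form of the mean value inequality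
along segments turns this into a global bound on a convex ball.

Near a generic `X̄` the Gram matrices stay invertible, so `t_I` and `w_I` are `C¹`, and every
candidate value of `Λ` has the form `m / N - μ^Cap(±t_I(X))`. It remains to see that `Λ` is
continuous at generic points. Upper semicontinuity holds because the number of points in a closed
cap is upper semicontinuous. For lower semicontinuity, the set `M` of points of an optimal cap at
`Y` still lies in a slightly larger cap at nearby `X`. Minimising (or maximising) `‖y‖` subject to
`⟪X m, y⟫ ≥ 1` (or `≤ 1`) for `m ∈ M` gives an optimal `y` that, by Fermat's rule, lies in the span
of the active constraints. Hence `(y / ‖y‖, 1 / ‖y‖)` is a candidate cap `(w_J, t_J)` containing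
`M`, with a value no smaller than before. The maximisation problem is bounded when `0` lies in the convex
hull of the points of `M`; otherwise `M` is separated from `0`, and a cap of positive height already
does better.
-/

open Real Set
open scoped RealInnerProductSpace

noncomputable section

/-- A point set is generic if every subfamily of at most `d` of its points is linearly
independent in `ℝ^d`. -/
def Generic {d N : ℕ} (X : Fin N → EuclideanSpace ℝ (Fin d)) : Prop :=
  ∀ I : Finset (Fin N), I.card ≤ d → LinearIndependent ℝ (fun i : I => X i)

/-- The Gram matrix `X_I^T X_I` of the subfamily of points indexed by `I`. -/
def Gram {d N : ℕ} (X : Fin N → EuclideanSpace ℝ (Fin d)) (I : Finset (Fin N)) :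
    Matrix I I ℝ :=
  fun i j => ⟪X i, X j⟫

/-- `t_I = (1^T (X_I^T X_I)^{-1} 1)^{-1/2}`. -/
def tI {d N : ℕ} (X : Fin N → EuclideanSpace ℝ (Fin d)) (I : Finset (Fin N)) : ℝ :=
  (Real.sqrt (∑ i : I, ∑ j : I, (Gram X I)⁻¹ i j))⁻¹

/-- `w_I = t_I X_I (X_I^T X_I)^{-1} 1`. -/
def wI {d N : ℕ} (X : Fin N → EuclideanSpace ℝ (Fin d)) (I : Finset (Fin N)) :
    EuclideanSpace ℝ (Fin d) :=
  tI X I • ∑ i : I, (∑ j : I, (Gram X I)⁻¹ i j) • X i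

/-- Normalizing constant `C_d`. -/
def Cd (d : ℕ) : ℝ := (∫ τ in (0:ℝ)..π, Real.sin τ ^ (d - 2))⁻¹

/-- The cap measure `μ^{cap}(t)` on `[-1,1]`. -/
def capM (d : ℕ) (t : ℝ) : ℝ :=
  if 0 ≤ t then Cd d * ∫ τ in (0:ℝ)..Real.arccos t, Real.sin τ ^ (d - 2)
  else 1 - Cd d * ∫ τ in (0:ℝ)..Real.arccos (-t), Real.sin τ ^ (d - 2)

/-- The extended cap measure `μ^{Cap}` for `d ≥ 3`. -/
def capExtG (d : ℕ) (t : ℝ) : ℝ :=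
  if |t| ≤ 1 then capM d t
  else if d = 3 then -t / 2 + 1 / 2
  else if t > 1 then 0 else 1

/-- The (extended) empirical measure `μ^{Emp}(X,w,t)` of the closed half space. -/
def empM {d N : ℕ} (X : Fin N → EuclideanSpace ℝ (Fin d)) (w : EuclideanSpace ℝ (Fin d))
    (t : ℝ) : ℝ :=
  (Nat.card {i : Fin N // t ≤ ⟪w, X i⟫} : ℝ) / N

/-- The generalized cap discrepancy `Λ(X)` for generic `X ∈ (ℝ^d)^N`. -/
def Lam (d N : ℕ) (X : Fin N → EuclideanSpace ℝ (Fin d)) : ℝ :=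
  sSup {r : ℝ | ∃ I : Finset (Fin N), I.Nonempty ∧ I.card ≤ d ∧
    (r = empM X (wI X I) (tI X I) - capExtG d (tI X I) ∨
     r = empM X (-(wI X I)) (-(tI X I)) - capExtG d (-(tI X I)))}

open Filter Topology Metric
open scoped NNReal

section Selection

theorem ContinuousWithinAt.of_eventually_dist_le {α β : Type*} [PseudoMetricSpace α]
    [PseudoMetricSpace β] {f : α → β} {s : Set α} {p : α} {K : ℝ}
    (hf : ∀ᶠ q in 𝓝[s] p, dist (f q) (f p) ≤ K * dist q p) : ContinuousWithinAt f s p := by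
  refine tendsto_iff_dist_tendsto_zero.2
    (squeeze_zero' (Eventually.of_forall fun _ => dist_nonneg) hf ?_)
  have : Continuous fun q => K * dist q p := by fun_prop
  simpa using (this.continuousWithinAt (s := s) (x := p)).tendsto

variable {E F : Type*} [NormedAddCommGroup E] [NormedSpace ℝ E]

theorem Convex.lipschitzOnWith_of_eventually_dist_le [PseudoMetricSpace F] {f : E → F}
    {s : Set E} (hs : Convex ℝ s) {K : ℝ≥0}
    (hf : ∀ p ∈ s, ∀ᶠ q in 𝓝[s] p, dist (f q) (f p) ≤ K * dist q p) :
    LipschitzOnWith K f s := by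
  refine LipschitzOnWith.of_dist_le_mul fun z hz y hy => ?_
  set γ : ℝ → E := fun t => AffineMap.lineMap (k := ℝ) y z t
  have hγ : Continuous γ := AffineMap.lineMap_continuous
  have hγs : MapsTo γ (Icc 0 1) s := fun t ht => hs.lineMap_mem hy hz ht
  set φ : ℝ → ℝ := fun t => dist (f (γ t)) (f y)
  have hφ : ContinuousOn φ (Icc 0 1) := fun t ht =>
    Tendsto.dist (ContinuousWithinAt.comp (.of_eventually_dist_le (hf _ (hγs ht)))
      hγ.continuousWithinAt hγs) tendsto_const_nhds
  have hslope : ∀ t ∈ Ico (0 : ℝ) 1, ∀ᶠ u in 𝓝[>] t, slope φ t u ≤ K * dist y z := by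
    intro t ht
    have hγt : Tendsto γ (𝓝[>] t) (𝓝[s] (γ t)) :=
      tendsto_nhdsWithin_iff.2 ⟨hγ.continuousAt.tendsto.mono_left nhdsWithin_le_nhds,
        eventually_of_mem (Ioo_mem_nhdsGT ht.2) fun u hu => hγs ⟨ht.1.trans hu.1.le, hu.2.le⟩⟩
    filter_upwards [hγt.eventually (hf (γ t) (hγs (Ico_subset_Icc_self ht))),
      self_mem_nhdsWithin] with u hu htu
    have htu' : 0 < u - t := sub_pos.2 htu
    rw [slope_def_field, div_le_iff₀ htu']
    calc φ u - φ t ≤ dist (f (γ u)) (f (γ t)) := by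
          linarith [dist_triangle (f (γ u)) (f (γ t)) (f y)]
      _ ≤ K * ((u - t) * dist y z) := by
          rwa [dist_lineMap_lineMap, Real.dist_eq, abs_of_pos htu'] at hu
      _ = K * dist y z * (u - t) := by ring
  have key := image_le_of_liminf_slope_right_le_deriv_boundary hφ
    (B := fun t => K * dist y z * t) (B' := fun _ => K * dist y z) (by simp [φ, γ])
    (by fun_prop)
    (fun t _ => ((hasDerivAt_id t).const_mul _).hasDerivWithinAt.congr_deriv (mul_one _))
    fun t ht r hr => ((hslope t ht).mono fun _ hu => hu.trans_lt hr).frequently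
  simpa [φ, γ, dist_comm y z] using key (right_mem_Icc.2 zero_le_one)

theorem LipschitzOnWith.of_selection [MetricSpace F] {ι : Type*} [Finite ι] {s : Set E}
    (hs : Convex ℝ s) {f : E → F} (hf : ContinuousOn f s) {g : ι → E → F} {K : ℝ≥0}
    (hg : ∀ i, LipschitzOnWith K (g i) s) (hfg : ∀ x ∈ s, ∃ i, f x = g i x) :
    LipschitzOnWith K f s := by
  refine hs.lipschitzOnWith_of_eventually_dist_le fun p hp => ?_
  -- near `p`, `f` can only agree with those `g i` that agree with it at `p`
  have hactive : ∀ i, ∀ᶠ q in 𝓝[s] p, f q = g i q → f p = g i p := by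
    intro i
    by_cases hi : f p = g i p
    · exact Eventually.of_forall fun _ _ => hi
    · have hsub : Tendsto (fun q => dist (f q) (g i q)) (𝓝[s] p) (𝓝 (dist (f p) (g i p))) :=
        (hf p hp).dist ((hg i).continuousOn p hp)
      filter_upwards [hsub.eventually_ne (dist_ne_zero.2 hi)] with q hq hfq
      exact absurd (dist_eq_zero.2 hfq) hq
  filter_upwards [eventually_all.2 hactive, self_mem_nhdsWithin] with q hq hqs
  obtain ⟨i, hi⟩ := hfg q hqs
  rw [hi, hq i hi]
  exact (hg i).dist_le_mul q hqs p hp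

variable [NormedAddCommGroup F] [NormedSpace ℝ F]

theorem exists_ball_lipschitzOnWith_of_selection {ι : Type*} [Finite ι] {U : Set E} {x : E}
    (hU : U ∈ 𝓝 x) {f : E → F} (hf : ContinuousOn f U) {g : ι → E → F}
    (hg : ∀ i, ContDiffAt ℝ 1 (g i) x) (hfg : ∀ y ∈ U, ∃ i, f y = g i y) :
    ∃ K : ℝ≥0, ∃ ε : ℝ, 0 < ε ∧ ball x ε ⊆ U ∧ LipschitzOnWith K f (ball x ε) := by
  choose K t ht hK using fun i => (hg i).exists_lipschitzOnWith
  obtain ⟨ε, hε, hball⟩ := Metric.mem_nhds_iff.1 (inter_mem hU (iInter_mem.2 ht))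
  have hKle : ∀ i, K i ≤ ⨆ j, K j := le_ciSup (Finite.bddAbove_range K)
  refine ⟨⨆ i, K i, ε, hε, fun y hy => (hball hy).1, ?_⟩
  refine LipschitzOnWith.of_selection (convex_ball x ε) (hf.mono fun y hy => (hball hy).1)
    (fun i => ((hK i).mono fun y hy => mem_iInter.1 (hball hy).2 i).weaken (hKle i))
    fun y hy => hfg y (hball hy).1

end Selection

section CapMeasure

open intervalIntegral MeasureTheory

-- `√` of a negative number is `0`, so for `4 ≤ d` this density vanishes outside `[-1, 1]`,
-- while for `d = 3` it is `1` everywhere: these are the two ways `capExtG` extends the cap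
-- measure beyond `[-1, 1]`.
def capDensity (d : ℕ) (s : ℝ) : ℝ := √(1 - s ^ 2) ^ (d - 3)

variable {d : ℕ}

lemma continuous_capDensity : Continuous (capDensity d) := by
  unfold capDensity; fun_prop

lemma capDensity_nonneg (s : ℝ) : 0 ≤ capDensity d s := by
  unfold capDensity; positivity

lemma capDensity_eq_zero (hd : 4 ≤ d) {s : ℝ} (hs : 1 ≤ |s|) : capDensity d s = 0 := by
  have : 1 - s ^ 2 ≤ 0 := by nlinarith [sq_abs s]
  rw [capDensity, Real.sqrt_eq_zero'.2 this, zero_pow (by omega)]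

lemma intervalIntegrable_capDensity (a b : ℝ) : IntervalIntegrable (capDensity d) volume a b :=
  continuous_capDensity.intervalIntegrable a b

lemma integral_capDensity_neg (a b : ℝ) :
    ∫ s in -b..-a, capDensity d s = ∫ s in a..b, capDensity d s := by
  rw [← intervalIntegral.integral_comp_neg]; simp [capDensity]

lemma integral_capDensity_eq_zero (hd : 4 ≤ d) {a b : ℝ} (h : ∀ s ∈ uIcc a b, 1 ≤ |s|) :
    ∫ s in a..b, capDensity d s = 0 := by
  rw [integral_congr fun s hs => capDensity_eq_zero hd (h s hs)]; simp

lemma sin_mul_capDensity_cos (hd : 3 ≤ d) {τ : ℝ} (hτ : 0 ≤ Real.sin τ) :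
    Real.sin τ * capDensity d (Real.cos τ) = Real.sin τ ^ (d - 2) := by
  rw [capDensity, ← sin_sq, Real.sqrt_sq hτ, ← pow_succ', show d - 3 + 1 = d - 2 by omega]

lemma integral_sin_pow_arccos (hd : 3 ≤ d) {t : ℝ} (ht : t ∈ Icc (-1 : ℝ) 1) :
    ∫ τ in (0:ℝ)..arccos t, Real.sin τ ^ (d - 2) = ∫ s in t..1, capDensity d s := by
  have hsub := integral_comp_mul_deriv (a := 0) (b := arccos t) (g := capDensity d)
    (fun τ _ => hasDerivAt_cos τ) (by fun_prop) continuous_capDensity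
  rw [cos_zero, cos_arccos ht.1 ht.2, integral_symm t 1] at hsub
  rw [← neg_neg (∫ s in t..1, _), ← hsub, ← intervalIntegral.integral_neg]
  refine integral_congr fun τ hτ => ?_
  rw [uIcc_of_le (arccos_nonneg t)] at hτ
  have hsin := sin_nonneg_of_nonneg_of_le_pi hτ.1 (hτ.2.trans (arccos_le_pi t))
  rw [Function.comp_apply, mul_neg, neg_neg, mul_comm, sin_mul_capDensity_cos hd hsin]

lemma Cd_mul_integral_capDensity (hd : 3 ≤ d) :
    Cd d * ∫ s in (-1:ℝ)..1, capDensity d s = 1 := by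
  rw [← integral_sin_pow_arccos hd (by norm_num), arccos_neg_one, Cd]
  exact inv_mul_cancel₀ (integral_sin_pow_pos (d - 2)).ne'

lemma capExtG_eq_integral (hd : 3 ≤ d) (t : ℝ) :
    capExtG d t = Cd d * ∫ s in t..1, capDensity d s := by
  have hsplit : ∀ a b c : ℝ, (∫ s in a..b, capDensity d s) + ∫ s in b..c, capDensity d s =
      ∫ s in a..c, capDensity d s := fun a b c =>
    integral_add_adjacent_intervals (intervalIntegrable_capDensity _ _)
      (intervalIntegrable_capDensity _ _)
  have htotal := Cd_mul_integral_capDensity hd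
  unfold capExtG capM
  split_ifs with ht ht0 hd3 ht1
  · rw [integral_sin_pow_arccos hd (abs_le.1 ht)]
  · have hsym : ∫ s in -t..1, capDensity d s = ∫ s in (-1)..t, capDensity d s := by
      simpa using integral_capDensity_neg (d := d) (-1) t
    rw [integral_sin_pow_arccos hd ⟨by linarith [abs_le.1 ht], by linarith [abs_le.1 ht]⟩, hsym]
    linear_combination -htotal - Cd d * hsplit (-1) t 1
  · subst hd3
    have hC : Cd 3 = 2⁻¹ := by norm_num [Cd, integral_sin]
    simp [capDensity, hC]
    ring
  · rw [integral_capDensity_eq_zero (by omega) fun s hs => ?_, mul_zero]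
    rw [uIcc_of_ge ht1.le] at hs
    exact (le_abs_self s).trans' hs.1
  · have htm : t < -1 := by cases abs_cases t <;> linarith
    rw [← hsplit t (-1) 1, integral_capDensity_eq_zero (by omega) fun s hs => ?_, zero_add,
      htotal]
    rw [uIcc_of_le htm.le] at hs
    exact (neg_le_abs s).trans' (by linarith [hs.2])

lemma hasDerivAt_capExtG (hd : 3 ≤ d) (t : ℝ) :
    HasDerivAt (capExtG d) (-(Cd d * capDensity d t)) t := by
  have h := (integral_hasDerivAt_left (intervalIntegrable_capDensity (d := d) t 1)
    (continuous_capDensity.stronglyMeasurableAtFilter _ _)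
    continuous_capDensity.continuousAt).const_mul (Cd d)
  rw [mul_neg] at h
  exact h.congr_of_eventuallyEq (Eventually.of_forall fun u => capExtG_eq_integral hd u)

lemma contDiff_capExtG (hd : 3 ≤ d) : ContDiff ℝ 1 (capExtG d) := by
  rw [contDiff_one_iff_deriv]
  refine ⟨fun t => (hasDerivAt_capExtG hd t).differentiableAt, ?_⟩
  rw [funext fun t => (hasDerivAt_capExtG hd t).deriv]
  exact (continuous_const.mul continuous_capDensity).neg

lemma antitone_capExtG (hd : 3 ≤ d) : Antitone (capExtG d) :=
  antitone_of_deriv_nonpos (fun t => (hasDerivAt_capExtG hd t).differentiableAt) fun t => by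
    rw [(hasDerivAt_capExtG hd t).deriv, neg_nonpos]
    exact mul_nonneg (inv_nonneg.2 (integral_sin_pow_pos (d - 2)).le) (capDensity_nonneg t)

end CapMeasure

section MatrixInverse

variable {𝕜 E : Type*} [NontriviallyNormedField 𝕜] [NormedAddCommGroup E] [NormedSpace 𝕜 E]
  {n : Type*} [Fintype n] [DecidableEq n] {k : WithTop ℕ∞} {A : E → Matrix n n 𝕜}

lemma contDiff_matrix_det (hA : ∀ i j, ContDiff 𝕜 k fun x => A x i j) :
    ContDiff 𝕜 k fun x => (A x).det := by
  simp only [Matrix.det_apply']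
  exact ContDiff.sum fun σ _ => contDiff_const.mul (contDiff_prod fun i _ => hA _ _)

lemma contDiff_matrix_adjugate_apply (hA : ∀ i j, ContDiff 𝕜 k fun x => A x i j) (i j : n) :
    ContDiff 𝕜 k fun x => (A x).adjugate i j := by
  simp only [Matrix.adjugate_apply]
  refine contDiff_matrix_det fun a b => ?_
  by_cases h : a = j <;> simp [Matrix.updateRow_apply, h, hA, contDiff_const]

lemma contDiffAt_matrix_inv_apply (hA : ∀ i j, ContDiff 𝕜 k fun x => A x i j) {x : E}
    (hx : (A x).det ≠ 0) (i j : n) : ContDiffAt 𝕜 k (fun x => (A x)⁻¹ i j) x := by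
  simp only [Matrix.inv_def, Matrix.smul_apply, Ring.inverse_eq_inv', smul_eq_mul]
  exact ((contDiff_matrix_det hA).contDiffAt.inv hx).mul
    (contDiff_matrix_adjugate_apply hA i j).contDiffAt

end MatrixInverse

section GramMatrix

open Matrix

variable {d N : ℕ} {X : Fin N → EuclideanSpace ℝ (Fin d)} {I : Finset (Fin N)}

/-- `X_I (X_I^T X_I)^{-1} 1`, so that `wI X I = tI X I • uI X I`. -/
def uI (X : Fin N → EuclideanSpace ℝ (Fin d)) (I : Finset (Fin N)) :
    EuclideanSpace ℝ (Fin d) :=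
  ∑ i : I, (∑ j : I, (Gram X I)⁻¹ i j) • X i

lemma Generic.det_gram_ne_zero (hX : Generic X) (hI : I.card ≤ d) : (Gram X I).det ≠ 0 :=
  (posDef_gram_of_linearIndependent (hX I hI)).det_pos.ne'

lemma uI_mem_span : uI X I ∈ Submodule.span ℝ (X '' I) :=
  Submodule.sum_mem _ fun i _ =>
    Submodule.smul_mem _ _ (Submodule.subset_span (mem_image_of_mem X i.2))

lemma inner_uI (hdet : (Gram X I).det ≠ 0) (k : I) : ⟪uI X I, X k⟫ = 1 := by
  have h := congrFun
    (congrArg (· *ᵥ (1 : I → ℝ)) (mul_nonsing_inv _ (isUnit_iff_ne_zero.2 hdet))) k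
  simp only [← mulVec_mulVec, one_mulVec, Pi.one_apply] at h
  rw [← h, uI, sum_inner]
  simp only [real_inner_smul_left, mulVec, dotProduct, Pi.one_apply, mul_one]
  exact Finset.sum_congr rfl fun i _ => by rw [mul_comm, real_inner_comm]; rfl

lemma eq_uI_of_mem_span (hdet : (Gram X I).det ≠ 0) {y : EuclideanSpace ℝ (Fin d)}
    (hy : y ∈ Submodule.span ℝ (X '' I)) (hyX : ∀ k ∈ I, ⟪X k, y⟫ = 1) : y = uI X I := by
  obtain ⟨c, hcI, f, hf⟩ := (Submodule.mem_span_image_iff_exists_fun ℝ).1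
    (Submodule.sub_mem _ hy uI_mem_span)
  have horth : ∀ k : c, ⟪y - uI X I, X k⟫ = 0 := fun k => by
    rw [inner_sub_left, real_inner_comm, hyX k (hcI k.2), inner_uI hdet ⟨k, hcI k.2⟩, sub_self]
  rw [← sub_eq_zero, ← inner_self_eq_zero (𝕜 := ℝ)]
  nth_rewrite 2 [← hf]
  simp [inner_sum, real_inner_smul_right, horth]

lemma sum_inv_gram_eq_norm_uI_sq (hdet : (Gram X I).det ≠ 0) :
    ∑ i : I, ∑ j : I, (Gram X I)⁻¹ i j = ‖uI X I‖ ^ 2 := by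
  have h : ⟪uI X I, ∑ i : I, (∑ j : I, (Gram X I)⁻¹ i j) • X i⟫ =
      ∑ i : I, ∑ j : I, (Gram X I)⁻¹ i j := by
    simp [inner_sum, real_inner_smul_right, inner_uI hdet]
  rw [← real_inner_self_eq_norm_sq]
  exact h.symm

lemma tI_eq (hdet : (Gram X I).det ≠ 0) : tI X I = ‖uI X I‖⁻¹ := by
  rw [tI, sum_inv_gram_eq_norm_uI_sq hdet, sqrt_sq (norm_nonneg _)]

lemma wI_eq (hdet : (Gram X I).det ≠ 0) : wI X I = ‖uI X I‖⁻¹ • uI X I := by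
  rw [← tI_eq hdet]; rfl

lemma uI_ne_zero (hdet : (Gram X I).det ≠ 0) (hI : I.Nonempty) : uI X I ≠ 0 := by
  obtain ⟨k, hk⟩ := hI
  intro h
  simpa [h] using inner_uI hdet ⟨k, hk⟩

lemma tI_pos (hdet : (Gram X I).det ≠ 0) (hI : I.Nonempty) : 0 < tI X I := by
  rw [tI_eq hdet]; exact inv_pos.2 (norm_pos_iff.2 (uI_ne_zero hdet hI))

lemma norm_wI (hdet : (Gram X I).det ≠ 0) (hI : I.Nonempty) : ‖wI X I‖ = 1 := by
  rw [wI_eq hdet, norm_smul, norm_inv, norm_norm,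
    inv_mul_cancel₀ (norm_ne_zero_iff.2 (uI_ne_zero hdet hI))]

lemma inner_wI (hdet : (Gram X I).det ≠ 0) {k : Fin N} (hk : k ∈ I) :
    ⟪wI X I, X k⟫ = tI X I := by
  rw [wI, real_inner_smul_left]
  change tI X I * ⟪uI X I, X (⟨k, hk⟩ : I)⟫ = _
  rw [inner_uI hdet, mul_one]

lemma wI_eq_and_tI_eq_of_mem_span (hdet : (Gram X I).det ≠ 0) {y : EuclideanSpace ℝ (Fin d)}
    (hy : y ∈ Submodule.span ℝ (X '' I)) (hyX : ∀ k ∈ I, ⟪X k, y⟫ = 1) :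
    wI X I = ‖y‖⁻¹ • y ∧ tI X I = ‖y‖⁻¹ := by
  obtain rfl := eq_uI_of_mem_span hdet hy hyX
  exact ⟨wI_eq hdet, tI_eq hdet⟩

variable {k : WithTop ℕ∞} {Y : Fin N → EuclideanSpace ℝ (Fin d)}

lemma contDiff_gram_apply (i j : I) :
    ContDiff ℝ k fun X : Fin N → EuclideanSpace ℝ (Fin d) => Gram X I i j :=
  (contDiff_apply ℝ _ (i : Fin N)).inner ℝ (contDiff_apply ℝ _ (j : Fin N))

lemma contDiffAt_tI (hdet : (Gram Y I).det ≠ 0) (hI : I.Nonempty) :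
    ContDiffAt ℝ k (fun X => tI X I) Y := by
  have hsum : ContDiffAt ℝ k (fun X => ∑ i : I, ∑ j : I, (Gram X I)⁻¹ i j) Y :=
    ContDiffAt.sum fun i _ => ContDiffAt.sum fun j _ =>
      contDiffAt_matrix_inv_apply contDiff_gram_apply hdet i j
  have hpos : 0 < ∑ i : I, ∑ j : I, (Gram Y I)⁻¹ i j := by
    rw [sum_inv_gram_eq_norm_uI_sq hdet]; exact pow_pos (norm_pos_iff.2 (uI_ne_zero hdet hI)) 2
  exact (hsum.sqrt hpos.ne').inv (sqrt_pos.2 hpos).ne'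

lemma contDiffAt_wI (hdet : (Gram Y I).det ≠ 0) (hI : I.Nonempty) :
    ContDiffAt ℝ k (fun X => wI X I) Y :=
  (contDiffAt_tI hdet hI).smul <| ContDiffAt.sum fun i _ =>
    (ContDiffAt.sum fun j _ => contDiffAt_matrix_inv_apply contDiff_gram_apply hdet i j).smul
      (contDiff_apply ℝ _ (i : Fin N)).contDiffAt

end GramMatrix

section Polyhedra

variable {E : Type*} [NormedAddCommGroup E] [InnerProductSpace ℝ E]

lemma eventually_forall_inner_add_smul_mem {ι : Type*} {v : ι → E} {M : Finset ι} {S : Set ℝ}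
    {c : ℝ} (hS : ∀ r ∈ S, r ≠ c → S ∈ 𝓝 r) {y b : E} (hy : ∀ m ∈ M, ⟪v m, y⟫ ∈ S)
    (hb : ∀ m ∈ M, ⟪v m, y⟫ = c → ⟪v m, b⟫ = 0) :
    ∀ᶠ ε : ℝ in 𝓝 0, ∀ m ∈ M, ⟪v m, y + ε • b⟫ ∈ S := by
  refine (Finset.eventually_all M).2 fun m hm => ?_
  by_cases hc : ⟪v m, y⟫ = c
  · exact Eventually.of_forall fun ε => by
      simpa [inner_add_right, inner_smul_right, hb m hm hc] using hy m hm
  · have : Continuous fun ε : ℝ => ⟪v m, y + ε • b⟫ := by fun_prop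
    exact this.continuousAt.preimage_mem_nhds (by simpa using hS _ (hy m hm) hc)

-- Fermat's rule for `‖·‖²` along the directions orthogonal to `K`.
lemma mem_of_isExtrOn_norm_sq {K : Submodule ℝ E} [K.HasOrthogonalProjection] {P : Set E}
    {y : E} (hy : IsExtrOn (fun z => ‖z‖ ^ 2) P y)
    (hP : ∀ b ∈ Kᗮ, ∀ᶠ ε : ℝ in 𝓝 0, y + ε • b ∈ P) : y ∈ K := by
  obtain ⟨u, hu, b, hb, rfl⟩ := K.exists_add_mem_mem_orthogonal y
  have hloc : IsLocalExtr (fun ε : ℝ => ‖u + b + ε • b‖ ^ 2) 0 :=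
    IsExtrFilter.comp_tendsto (f := fun z => ‖z‖ ^ 2) (g := fun ε : ℝ => u + b + ε • b)
      (b := 0) (by rw [zero_smul, add_zero]; exact hy) (tendsto_principal.2 (hP b hb))
  have hderiv : HasDerivAt (fun ε : ℝ => ‖u + b + ε • b‖ ^ 2) (2 * ⟪u + b, b⟫) 0 := by
    simpa using (((hasDerivAt_id (0:ℝ)).smul_const b).const_add (u + b)).norm_sq
  have h := hloc.hasDerivAt_eq_zero hderiv
  rw [inner_add_left, K.inner_right_of_mem_orthogonal hu hb, zero_add, mul_eq_zero,
    inner_self_eq_zero] at h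
  simpa [h.resolve_left two_ne_zero] using hu

lemma exists_forall_one_le_inner_of_zero_notMem_convexHull [CompleteSpace E] {ι : Type*}
    {v : ι → E} {M : Finset ι} (h : (0 : E) ∉ convexHull ℝ (v '' M)) :
    ∃ y, ∀ m ∈ M, 1 ≤ ⟪v m, y⟫ := by
  obtain ⟨f, u, hf0, hfu⟩ := geometric_hahn_banach_point_closed (convex_convexHull ℝ _)
    ((M.finite_toSet.image v).isCompact_convexHull ℝ).isClosed h
  rw [map_zero] at hf0
  refine ⟨(InnerProductSpace.toDual ℝ E).symm (u⁻¹ • f), fun m hm => ?_⟩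
  rw [real_inner_comm, InnerProductSpace.toDual_symm_apply, smul_apply, smul_eq_mul,
    le_inv_mul_iff₀ hf0, mul_one]
  exact (hfu _ (subset_convexHull ℝ _ (mem_image_of_mem v hm))).le

lemma neg_inv_le_inner_of_sum_smul_eq_zero {ι : Type*} {v : ι → E} {M : Finset ι} {c : ι → ℝ}
    (hc0 : ∀ m ∈ M, 0 ≤ c m) (hc1 : ∑ m ∈ M, c m = 1) (hcv : ∑ m ∈ M, c m • v m = 0) {z : E}
    (hz : ∀ m ∈ M, ⟪v m, z⟫ ≤ 1) {m : ι} (hm : m ∈ M) (hcm : 0 < c m) :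
    -(c m)⁻¹ ≤ ⟪v m, z⟫ := by
  classical
  have hzero : ∑ n ∈ M, c n * ⟪v n, z⟫ = 0 := by
    simpa [sum_inner, real_inner_smul_left] using congrArg (⟪·, z⟫) hcv
  have hrest : ∑ n ∈ M.erase m, c n * ⟪v n, z⟫ ≤ 1 :=
    calc ∑ n ∈ M.erase m, c n * ⟪v n, z⟫ ≤ ∑ n ∈ M.erase m, c n :=
          Finset.sum_le_sum fun n hn => mul_le_of_le_one_right
            (hc0 n (Finset.mem_of_mem_erase hn)) (hz n (Finset.mem_of_mem_erase hn))
      _ ≤ ∑ n ∈ M, c n :=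
          Finset.sum_le_sum_of_subset_of_nonneg (Finset.erase_subset m M) fun n hn _ => hc0 n hn
      _ = 1 := hc1
  rw [← Finset.add_sum_erase _ _ hm] at hzero
  refine (mul_le_mul_iff_of_pos_left hcm).1 ?_
  rw [mul_neg, mul_inv_cancel₀ hcm.ne']
  linarith

lemma isBounded_of_span_eq_top [FiniteDimensional ℝ E] {ι : Type*} {v : ι → E} {A : Finset ι}
    (hA : Submodule.span ℝ (v '' A) = ⊤) {S : Set E} {C : ℝ}
    (hS : ∀ z ∈ S, ∀ m ∈ A, |⟪v m, z⟫| ≤ C) : Bornology.IsBounded S := by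
  let L : E →ₗ[ℝ] (A → ℝ) := LinearMap.pi fun m => innerₛₗ ℝ (v m)
  have hker : LinearMap.ker L = ⊥ := by
    refine LinearMap.ker_eq_bot'.2 fun z hz => ?_
    have hle : ⊤ ≤ LinearMap.ker (innerₛₗ ℝ z) := hA ▸ Submodule.span_le.2 (by
      rintro _ ⟨m, hm, rfl⟩
      simpa [L, real_inner_comm] using congrFun hz ⟨m, hm⟩)
    exact inner_self_eq_zero.1 (hle Submodule.mem_top)
  obtain ⟨K, -, hK⟩ := L.exists_antilipschitzWith hker
  refine (hK.isBounded_preimage (isBounded_closedBall (x := 0) (r := max C 0))).subset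
    fun z hz => ?_
  rw [mem_preimage, mem_closedBall_zero_iff, pi_norm_le_iff_of_nonneg (le_max_right _ _)]
  exact fun m => (hS z hz m m.2).trans (le_max_left _ _)

end Polyhedra

namespace Generic

variable {d N : ℕ} {X Y : Fin N → EuclideanSpace ℝ (Fin d)}

lemma injective (hX : Generic X) (hd : 2 ≤ d) : Function.Injective X := by
  classical
  intro i j hij
  by_contra hne
  have := (hX {i, j} (by rw [Finset.card_pair hne]; exact hd)).injective
    (a₁ := ⟨i, by simp⟩) (a₂ := ⟨j, by simp⟩) hij
  exact hne (congrArg Subtype.val this)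

protected lemma eventually (hY : Generic Y) : ∀ᶠ X in 𝓝 Y, Generic X := by
  have h : ∀ J : Finset (Fin N), ∀ᶠ X in 𝓝 Y, J.card ≤ d →
      LinearIndependent ℝ fun i : J => X i := fun J => by
    by_cases hJ : J.card ≤ d
    · have hcont : Continuous fun (X : Fin N → EuclideanSpace ℝ (Fin d)) (i : J) => X i :=
        continuous_pi fun i => continuous_apply _
      exact (hcont.tendsto Y |>.eventually (hY J hJ).eventually).mono fun _ h _ => h
    · exact Eventually.of_forall fun _ h => absurd h hJ
  filter_upwards [eventually_all.2 h] with X hX J hJ using hX J hJ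

lemma span_eq_top (hX : Generic X) {A : Finset (Fin N)} (hA : d ≤ A.card) :
    Submodule.span ℝ (X '' A) = ⊤ := by
  obtain ⟨J, hJA, hJ⟩ := Finset.exists_subset_card_eq hA
  have htop := (hX J hJ.le).span_eq_top_of_card_eq_finrank' (by simp [hJ])
  rw [eq_top_iff, ← htop]
  exact Submodule.span_mono (by rintro _ ⟨i, rfl⟩; exact mem_image_of_mem X (hJA i.2))

lemma exists_subset_mem_span (hX : Generic X) {A : Finset (Fin N)}
    {y : EuclideanSpace ℝ (Fin d)} (hy : y ∈ Submodule.span ℝ (X '' A)) :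
    ∃ I ⊆ A, I.card ≤ d ∧ y ∈ Submodule.span ℝ (X '' I) := by
  by_cases hA : A.card ≤ d
  · exact ⟨A, subset_rfl, hA, hy⟩
  · obtain ⟨J, hJA, hJ⟩ := Finset.exists_subset_card_eq (not_le.1 hA).le
    exact ⟨J, hJA, hJ.le, hX.span_eq_top hJ.ge ▸ Submodule.mem_top⟩

lemma exists_cap_of_isExtrOn (hX : Generic X) {M : Finset (Fin N)}
    {P : Set (EuclideanSpace ℝ (Fin d))} {y : EuclideanSpace ℝ (Fin d)} (hy0 : y ≠ 0)
    (hy : IsExtrOn (fun z => ‖z‖ ^ 2) P y)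
    (hP : ∀ b, (∀ m ∈ M, ⟪X m, y⟫ = 1 → ⟪X m, b⟫ = 0) → ∀ᶠ ε : ℝ in 𝓝 0, y + ε • b ∈ P) :
    ∃ I : Finset (Fin N), I.Nonempty ∧ I.card ≤ d ∧ wI X I = ‖y‖⁻¹ • y ∧ tI X I = ‖y‖⁻¹ := by
  classical
  set A := M.filter fun m => ⟪X m, y⟫ = 1
  have hyA : y ∈ Submodule.span ℝ (X '' A) := mem_of_isExtrOn_norm_sq hy fun b hb =>
    hP b fun m hm hm1 => Submodule.inner_right_of_mem_orthogonal
      (Submodule.subset_span (mem_image_of_mem X (Finset.mem_filter.2 ⟨hm, hm1⟩))) hb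
  obtain ⟨I, hIA, hId, hyI⟩ := hX.exists_subset_mem_span hyA
  have hI : I.Nonempty := by
    rw [Finset.nonempty_iff_ne_empty]
    rintro rfl
    simp_all
  exact ⟨I, hI, hId, wI_eq_and_tI_eq_of_mem_span (hX.det_gram_ne_zero hId) hyI
    fun k hk => (Finset.mem_filter.1 (hIA hk)).2⟩

lemma exists_cap_ge (hX : Generic X) {M : Finset (Fin N)} (hM : M.Nonempty)
    {y₀ : EuclideanSpace ℝ (Fin d)} (hy₀ : ∀ m ∈ M, 1 ≤ ⟪X m, y₀⟫) :
    ∃ I : Finset (Fin N), I.Nonempty ∧ I.card ≤ d ∧ ‖y₀‖⁻¹ ≤ tI X I ∧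
      ∀ m ∈ M, tI X I ≤ ⟪wI X I, X m⟫ := by
  set Q := {z : EuclideanSpace ℝ (Fin d) | ∀ m ∈ M, 1 ≤ ⟪X m, z⟫}
  have hQ : IsClosed Q := by
    simp only [Q, ofPred_forall]
    exact isClosed_biInter fun m _ => isClosed_le continuous_const (by fun_prop)
  obtain ⟨y, ⟨hyQ, hyB⟩, hmin⟩ := ((isCompact_closedBall 0 ‖y₀‖).inter_left hQ).exists_isMinOn
    ⟨y₀, hy₀, by simp⟩ (continuous_norm.pow 2).continuousOn
  rw [mem_closedBall_zero_iff] at hyB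
  have hminQ : IsMinOn (fun z => ‖z‖ ^ 2) Q y := fun z hz => by
    by_cases hzB : ‖z‖ ≤ ‖y₀‖
    · exact hmin ⟨hz, mem_closedBall_zero_iff.2 hzB⟩
    · exact pow_le_pow_left₀ (norm_nonneg y) (hyB.trans (not_le.1 hzB).le) 2
  have hy0 : y ≠ 0 := by
    obtain ⟨m, hm⟩ := hM
    rintro rfl
    exact (hyQ m hm).not_gt (by simp)
  obtain ⟨I, hI, hId, hw, ht⟩ := hX.exists_cap_of_isExtrOn hy0 hminQ.isExtr fun b hb =>
    eventually_forall_inner_add_smul_mem (S := Ici 1)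
      (fun r hr h => Ici_mem_nhds (lt_of_le_of_ne hr (Ne.symm h))) hyQ hb
  refine ⟨I, hI, hId, ht ▸ inv_anti₀ (norm_pos_iff.2 hy0) hyB, fun m hm => ?_⟩
  rw [hw, ht, real_inner_smul_left, real_inner_comm]
  exact le_mul_of_one_le_right (inv_nonneg.2 (norm_nonneg y)) (hyQ m hm)

lemma exists_cap_le (hX : Generic X) {M : Finset (Fin N)}
    (hP : Bornology.IsBounded {z : EuclideanSpace ℝ (Fin d) | ∀ m ∈ M, ⟪X m, z⟫ ≤ 1})
    {y₀ : EuclideanSpace ℝ (Fin d)} (hy₀0 : y₀ ≠ 0) (hy₀ : ∀ m ∈ M, ⟪X m, y₀⟫ ≤ 1) :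
    ∃ I : Finset (Fin N), I.Nonempty ∧ I.card ≤ d ∧ tI X I ≤ ‖y₀‖⁻¹ ∧
      ∀ m ∈ M, ⟪wI X I, X m⟫ ≤ tI X I := by
  set P := {z : EuclideanSpace ℝ (Fin d) | ∀ m ∈ M, ⟪X m, z⟫ ≤ 1}
  have hPc : IsClosed P := by
    simp only [P, ofPred_forall]
    exact isClosed_biInter fun m _ => isClosed_le (by fun_prop) continuous_const
  obtain ⟨y, hyP, hmax⟩ := (Metric.isCompact_of_isClosed_isBounded hPc hP).exists_isMaxOn
    ⟨y₀, hy₀⟩ (continuous_norm.pow 2).continuousOn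
  have hy₀y : ‖y₀‖ ≤ ‖y‖ :=
    (pow_le_pow_iff_left₀ (norm_nonneg _) (norm_nonneg _) two_ne_zero).1 (hmax hy₀)
  have hy0 : y ≠ 0 := fun h => hy₀0 (norm_le_zero_iff.1 (by simpa [h] using hy₀y))
  obtain ⟨I, hI, hId, hw, ht⟩ := hX.exists_cap_of_isExtrOn hy0 hmax.isExtr fun b hb =>
    eventually_forall_inner_add_smul_mem (S := Iic 1)
      (fun r hr h => Iic_mem_nhds (lt_of_le_of_ne hr h)) hyP hb
  refine ⟨I, hI, hId, ht ▸ inv_anti₀ (norm_pos_iff.2 hy₀0) hy₀y, fun m hm => ?_⟩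
  rw [hw, ht, real_inner_smul_left, real_inner_comm]
  exact mul_le_of_le_one_right (inv_nonneg.2 (norm_nonneg y)) (hyP m hm)

lemma isBounded_of_zero_mem_convexHull (hX : Generic X) (hd : 2 ≤ d) {M : Finset (Fin N)}
    (h0 : (0 : EuclideanSpace ℝ (Fin d)) ∈ convexHull ℝ (X '' M)) :
    Bornology.IsBounded {z : EuclideanSpace ℝ (Fin d) | ∀ m ∈ M, ⟪X m, z⟫ ≤ 1} := by
  classical
  rw [← Finset.coe_image, Finset.mem_convexHull'] at h0
  obtain ⟨w, hw0, hw1, hw⟩ := h0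
  have hinj : Set.InjOn X M := (hX.injective hd).injOn
  set c : Fin N → ℝ := fun m => w (X m)
  have hc0 : ∀ m ∈ M, 0 ≤ c m := fun m hm => hw0 _ (Finset.mem_image_of_mem X hm)
  have hc1 : ∑ m ∈ M, c m = 1 := by rw [← hw1, Finset.sum_image hinj]
  have hcX : ∑ m ∈ M, c m • X m = 0 := by rw [← hw, Finset.sum_image hinj]
  set A := M.filter fun m => c m ≠ 0
  -- the points with nonzero weight are linearly dependent, so by genericity they span
  have hdA : d ≤ A.card := by
    by_contra! hA
    have hAX : ∑ m : A, c m • X m = 0 := by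
      rw [Finset.sum_coe_sort A fun m => c m • X m,
        Finset.sum_filter_of_ne fun m _ h => left_ne_zero_of_smul h, hcX]
    have hc : ∑ m ∈ M, c m = 0 := by
      rw [← Finset.sum_filter_ne_zero]
      exact Finset.sum_eq_zero fun m hm =>
        Fintype.linearIndependent_iff.1 (hX A hA.le) (fun m => c m) hAX ⟨m, hm⟩
    linarith
  refine isBounded_of_span_eq_top (hX.span_eq_top hdA)
    (C := ∑ m ∈ A, (1 + (c m)⁻¹)) fun z hz m hm => ?_
  have hm' := Finset.mem_filter.1 hm
  have hcm : 0 < c m := lt_of_le_of_ne (hc0 m hm'.1) (Ne.symm hm'.2)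
  have hlow := neg_inv_le_inner_of_sum_smul_eq_zero hc0 hc1 hcX hz hm'.1 hcm
  calc |⟪X m, z⟫| ≤ 1 + (c m)⁻¹ :=
        abs_le.2 ⟨by linarith [inv_pos.2 hcm], by linarith [hz m hm'.1, inv_pos.2 hcm]⟩
    _ ≤ ∑ m ∈ A, (1 + (c m)⁻¹) := Finset.single_le_sum (f := fun m => 1 + (c m)⁻¹)
        (fun n hn => by have := hc0 n (Finset.mem_filter.1 hn).1; positivity) hm

end Generic

lemma isOpen_setOf_generic {d N : ℕ} :
    IsOpen {X : Fin N → EuclideanSpace ℝ (Fin d) | Generic X} :=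
  isOpen_iff_mem_nhds.2 fun _ hY => hY.eventually

section Discrepancy

variable {d N : ℕ} {Y : Fin N → EuclideanSpace ℝ (Fin d)} {I : Finset (Fin N)}

def lamPlus (d : ℕ) (X : Fin N → EuclideanSpace ℝ (Fin d)) (I : Finset (Fin N)) : ℝ :=
  empM X (wI X I) (tI X I) - capExtG d (tI X I)

def lamMinus (d : ℕ) (X : Fin N → EuclideanSpace ℝ (Fin d)) (I : Finset (Fin N)) : ℝ :=
  empM X (-(wI X I)) (-(tI X I)) - capExtG d (-(tI X I))

lemma finite_lamSet (X : Fin N → EuclideanSpace ℝ (Fin d)) :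
    {r : ℝ | ∃ I : Finset (Fin N), I.Nonempty ∧ I.card ≤ d ∧
      (r = lamPlus d X I ∨ r = lamMinus d X I)}.Finite :=
  (finite_iUnion fun I : Finset (Fin N) => toFinite {lamPlus d X I, lamMinus d X I}).subset
    fun _ ⟨I, _, _, hr⟩ => mem_iUnion.2 ⟨I, hr⟩

lemma lamPlus_le_Lam (X : Fin N → EuclideanSpace ℝ (Fin d)) (hI : I.Nonempty)
    (hId : I.card ≤ d) : lamPlus d X I ≤ Lam d N X :=
  le_csSup (finite_lamSet X).bddAbove ⟨I, hI, hId, Or.inl rfl⟩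

lemma lamMinus_le_Lam (X : Fin N → EuclideanSpace ℝ (Fin d)) (hI : I.Nonempty)
    (hId : I.card ≤ d) : lamMinus d X I ≤ Lam d N X :=
  le_csSup (finite_lamSet X).bddAbove ⟨I, hI, hId, Or.inr rfl⟩

lemma exists_Lam_eq (hd : 1 ≤ d) (hN : 0 < N) (X : Fin N → EuclideanSpace ℝ (Fin d)) :
    ∃ I : Finset (Fin N), I.Nonempty ∧ I.card ≤ d ∧
      (Lam d N X = lamPlus d X I ∨ Lam d N X = lamMinus d X I) := by
  refine Set.Nonempty.csSup_mem ?_ (finite_lamSet X)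
  exact ⟨_, {⟨0, hN⟩}, Finset.singleton_nonempty _, by simpa using hd, Or.inl rfl⟩

lemma card_div_le_empM {X : Fin N → EuclideanSpace ℝ (Fin d)} {w : EuclideanSpace ℝ (Fin d)}
    {t : ℝ} {M : Finset (Fin N)} (hM : ∀ m ∈ M, t ≤ ⟪w, X m⟫) :
    (M.card : ℝ) / N ≤ empM X w t := by
  classical
  rw [empM, Nat.card_eq_fintype_card, Fintype.card_subtype]
  gcongr
  exact fun m hm => Finset.mem_filter.2 ⟨Finset.mem_univ m, hM m hm⟩

lemma empM_eq_card_div (X : Fin N → EuclideanSpace ℝ (Fin d)) (w : EuclideanSpace ℝ (Fin d))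
    (t : ℝ) [DecidablePred fun i => t ≤ ⟪w, X i⟫] :
    empM X w t = ((Finset.univ.filter fun i => t ≤ ⟪w, X i⟫).card : ℝ) / N := by
  rw [empM, Nat.card_eq_fintype_card, Fintype.card_subtype]

lemma eventually_empM_le {w : (Fin N → EuclideanSpace ℝ (Fin d)) → EuclideanSpace ℝ (Fin d)}
    {t : (Fin N → EuclideanSpace ℝ (Fin d)) → ℝ} (hw : ContinuousAt w Y)
    (ht : ContinuousAt t Y) : ∀ᶠ X in 𝓝 Y, empM X (w X) (t X) ≤ empM Y (w Y) (t Y) := by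
  have hclosed : ∀ i, ∀ᶠ X in 𝓝 Y, t X ≤ ⟪w X, X i⟫ → t Y ≤ ⟪w Y, Y i⟫ := fun i => by
    by_cases hi : t Y ≤ ⟪w Y, Y i⟫
    · exact Eventually.of_forall fun _ _ => hi
    · have hcont : ContinuousAt (fun X : Fin N → EuclideanSpace ℝ (Fin d) => ⟪w X, X i⟫) Y :=
        hw.inner (continuous_apply i).continuousAt
      filter_upwards [hcont.eventually_lt ht (not_le.1 hi)] with X hX hle
      exact absurd hle (not_le.2 hX)
  filter_upwards [eventually_all.2 hclosed] with X hX
  unfold empM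
  gcongr
  exact Nat.card_mono (toFinite _) fun i hi => hX i hi

lemma upperSemicontinuousAt_empM_sub
    {w : (Fin N → EuclideanSpace ℝ (Fin d)) → EuclideanSpace ℝ (Fin d)}
    {t : (Fin N → EuclideanSpace ℝ (Fin d)) → ℝ} (hw : ContinuousAt w Y) (ht : ContinuousAt t Y)
    {φ : ℝ → ℝ} (hφ : Continuous φ) :
    UpperSemicontinuousAt (fun X => empM X (w X) (t X) - φ (t X)) Y := by
  have hemp : UpperSemicontinuousAt (fun X => empM X (w X) (t X)) Y := fun r hr =>
    (eventually_empM_le hw ht).mono fun _ hX => hX.trans_lt hr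
  have hcap : ContinuousAt (fun X => -φ (t X)) Y := (hφ.continuousAt.comp ht).neg
  simpa only [sub_eq_add_neg] using hemp.add hcap.upperSemicontinuousAt

lemma upperSemicontinuousAt_Lam (hd : 3 ≤ d) (hN : 0 < N) (hY : Generic Y) :
    UpperSemicontinuousAt (Lam d N) Y := by
  intro r hr
  have hcand : ∀ I : Finset (Fin N), ∀ᶠ X in 𝓝 Y, I.Nonempty → I.card ≤ d →
      lamPlus d X I < r ∧ lamMinus d X I < r := fun I => by
    by_cases hI : I.Nonempty ∧ I.card ≤ d
    · have hdet := hY.det_gram_ne_zero hI.2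
      have ht := (contDiffAt_tI (k := 1) hdet hI.1).continuousAt
      have hw := (contDiffAt_wI (k := 1) hdet hI.1).continuousAt
      have hcap := (contDiff_capExtG hd).continuous
      filter_upwards [upperSemicontinuousAt_empM_sub hw ht hcap r
          ((lamPlus_le_Lam Y hI.1 hI.2).trans_lt hr),
        upperSemicontinuousAt_empM_sub hw.neg ht.neg hcap r
          ((lamMinus_le_Lam Y hI.1 hI.2).trans_lt hr)] with X h1 h2 _ _
      exact ⟨h1, h2⟩
    · exact Eventually.of_forall fun _ h1 h2 => absurd ⟨h1, h2⟩ hI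
  filter_upwards [eventually_all.2 hcand] with X hX
  obtain ⟨I, hI, hId, h | h⟩ := exists_Lam_eq (by omega) hN X
  · exact h ▸ (hX I hI hId).1
  · exact h ▸ (hX I hI hId).2

lemma eventually_lt_Lam_of_lt_lamPlus (hd : 3 ≤ d) (hY : ∀ᶠ X in 𝓝 Y, Generic X)
    (hI : I.Nonempty) (hId : I.card ≤ d) {r : ℝ} (hr : r < lamPlus d Y I) :
    ∀ᶠ X in 𝓝 Y, r < Lam d N X := by
  classical
  have hdet := hY.self_of_nhds.det_gram_ne_zero hId
  set M := Finset.univ.filter fun j => tI Y I ≤ ⟪wI Y I, Y j⟫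
  have hM : M.Nonempty := hI.imp fun i hi => by simp [M, inner_wI hdet hi]
  rw [lamPlus, empM_eq_card_div] at hr
  obtain ⟨τ, hτ, hτpos, hτt⟩ : ∃ τ, r < M.card / N - capExtG d τ ∧ 0 < τ ∧ τ < tI Y I := by
    have hcont : ContinuousAt (fun τ => (M.card : ℝ) / N - capExtG d τ) (tI Y I) :=
      (continuous_const.sub (contDiff_capExtG hd).continuous).continuousAt
    exact ((hcont.eventually (lt_mem_nhds hr)).filter_mono nhdsWithin_le_nhds |>.and
      (Ioo_mem_nhdsLT (tI_pos hdet hI))).exists.imp fun τ h => ⟨h.1, h.2⟩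
  have hnear : ∀ᶠ X in 𝓝 Y, ∀ m ∈ M, τ < ⟪wI X I, X m⟫ := (Finset.eventually_all M).2
    fun m hm => continuousAt_const.eventually_lt
      ((contDiffAt_wI (k := 1) hdet hI).continuousAt.inner (continuous_apply m).continuousAt)
      (hτt.trans_le (Finset.mem_filter.1 hm).2)
  filter_upwards [hY, hnear] with X hX hXM
  have hdetX := hX.det_gram_ne_zero hId
  obtain ⟨J, hJ, hJd, hJt, hJM⟩ := hX.exists_cap_ge hM (y₀ := τ⁻¹ • wI X I) fun m hm => by
    rw [real_inner_smul_right, real_inner_comm, le_inv_mul_iff₀ hτpos, mul_one]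
    exact (hXM m hm).le
  rw [norm_smul, norm_wI hdetX hI, mul_one, norm_inv, Real.norm_of_nonneg hτpos.le,
    inv_inv] at hJt
  calc r < M.card / N - capExtG d τ := hτ
    _ ≤ lamPlus d X J := sub_le_sub (card_div_le_empM hJM) (antitone_capExtG hd hJt)
    _ ≤ Lam d N X := lamPlus_le_Lam X hJ hJd

lemma eventually_lt_Lam_of_lt_lamMinus (hd : 3 ≤ d) (hY : ∀ᶠ X in 𝓝 Y, Generic X)
    (hI : I.Nonempty) (hId : I.card ≤ d) {r : ℝ} (hr : r < lamMinus d Y I) :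
    ∀ᶠ X in 𝓝 Y, r < Lam d N X := by
  classical
  have hdet := hY.self_of_nhds.det_gram_ne_zero hId
  set M := Finset.univ.filter fun j => -tI Y I ≤ ⟪-wI Y I, Y j⟫
  have hM : M.Nonempty := hI.imp fun i hi => by simp [M, inner_wI hdet hi]
  have hMY : ∀ m ∈ M, ⟪wI Y I, Y m⟫ ≤ tI Y I := fun m hm => by
    simpa [inner_neg_left] using (Finset.mem_filter.1 hm).2
  rw [lamMinus, empM_eq_card_div] at hr
  obtain ⟨τ, hτ, hτt⟩ : ∃ τ, r < M.card / N - capExtG d (-τ) ∧ tI Y I < τ := by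
    have hcont : ContinuousAt (fun τ => (M.card : ℝ) / N - capExtG d (-τ)) (tI Y I) :=
      (continuous_const.sub ((contDiff_capExtG hd).continuous.comp continuous_neg)).continuousAt
    exact ((hcont.eventually (lt_mem_nhds hr)).filter_mono nhdsWithin_le_nhds |>.and
      (self_mem_nhdsWithin : Ioi (tI Y I) ∈ 𝓝[>] tI Y I)).exists
  have hτpos : 0 < τ := (tI_pos hdet hI).trans hτt
  have hnear : ∀ᶠ X in 𝓝 Y, ∀ m ∈ M, ⟪wI X I, X m⟫ < τ := (Finset.eventually_all M).2
    fun m hm => ((contDiffAt_wI (k := 1) hdet hI).continuousAt.inner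
      (continuous_apply m).continuousAt).eventually_lt continuousAt_const
        ((hMY m hm).trans_lt hτt)
  filter_upwards [hY, hnear] with X hX hXM
  by_cases h0 : (0 : EuclideanSpace ℝ (Fin d)) ∈ convexHull ℝ (X '' M)
  · -- the smallest cap `⟪w, x⟫ ≤ t` around `M` has `t ≤ τ`
    have hdetX := hX.det_gram_ne_zero hId
    have hy₀ : τ⁻¹ • wI X I ≠ 0 := smul_ne_zero (inv_ne_zero hτpos.ne')
      (norm_ne_zero_iff.1 (by rw [norm_wI hdetX hI]; exact one_ne_zero))
    obtain ⟨J, hJ, hJd, hJt, hJM⟩ := hX.exists_cap_le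
      (hX.isBounded_of_zero_mem_convexHull (by omega) h0) hy₀ fun m hm => by
        rw [real_inner_smul_right, real_inner_comm, inv_mul_le_iff₀ hτpos, mul_one]
        exact (hXM m hm).le
    rw [norm_smul, norm_wI hdetX hI, mul_one, norm_inv, Real.norm_of_nonneg hτpos.le,
      inv_inv] at hJt
    calc r < M.card / N - capExtG d (-τ) := hτ
      _ ≤ lamMinus d X J := sub_le_sub (card_div_le_empM fun m hm => by
            simpa [inner_neg_left] using hJM m hm) (antitone_capExtG hd (neg_le_neg hJt))
      _ ≤ Lam d N X := lamMinus_le_Lam X hJ hJd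
  · -- `M` lies in a cap `⟪w, x⟫ ≥ t` with `t > 0 > -tI Y I`, hence of smaller cap measure
    obtain ⟨y₁, hy₁⟩ := exists_forall_one_le_inner_of_zero_notMem_convexHull h0
    obtain ⟨J, hJ, hJd, -, hJM⟩ := hX.exists_cap_ge hM hy₁
    have hcap : capExtG d (tI X J) ≤ capExtG d (-tI Y I) := antitone_capExtG hd
      ((neg_nonpos.2 (tI_pos hdet hI).le).trans (tI_pos (hX.det_gram_ne_zero hJd) hJ).le)
    calc r < M.card / N - capExtG d (-tI Y I) := hr
      _ ≤ lamPlus d X J := sub_le_sub (card_div_le_empM hJM) hcap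
      _ ≤ Lam d N X := lamPlus_le_Lam X hJ hJd

lemma continuousAt_Lam (hd : 3 ≤ d) (hN : 0 < N) (hY : Generic Y) :
    ContinuousAt (Lam d N) Y := by
  refine continuousAt_iff_lower_upperSemicontinuousAt.2
    ⟨fun r hr => ?_, upperSemicontinuousAt_Lam hd hN hY⟩
  obtain ⟨I, hI, hId, h | h⟩ := exists_Lam_eq (by omega) hN Y
  · exact eventually_lt_Lam_of_lt_lamPlus hd hY.eventually hI hId (h ▸ hr)
  · exact eventually_lt_Lam_of_lt_lamMinus hd hY.eventually hI hId (h ▸ hr)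

end Discrepancy

theorem Generic.exists_isOpen_lipschitzOnWith_Lam {d N : ℕ} (hd : 3 ≤ d) (hN : 0 < N)
    {Xb : Fin N → EuclideanSpace ℝ (Fin d)} (hXb : Generic Xb) :
    ∃ U : Set (Fin N → EuclideanSpace ℝ (Fin d)), IsOpen U ∧ Xb ∈ U ∧
      (∀ X ∈ U, Generic X) ∧ ∃ K : ℝ≥0, LipschitzOnWith K (Lam d N) U := by
  -- an empirical measure only takes the values `m / N`, `m ≤ N`
  let g : Fin (N + 1) × {I : Finset (Fin N) // I.Nonempty ∧ I.card ≤ d} × Bool →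
      (Fin N → EuclideanSpace ℝ (Fin d)) → ℝ := fun i X =>
    ((i.1 : ℕ) : ℝ) / N - capExtG d (if i.2.2 then tI X i.2.1 else -tI X i.2.1)
  have hg : ∀ i, ContDiffAt ℝ 1 (g i) Xb := by
    rintro ⟨m, ⟨I, hI, hId⟩, s⟩
    have ht := contDiffAt_tI (k := 1) (hXb.det_gram_ne_zero hId) hI
    refine contDiffAt_const.sub ((contDiff_capExtG hd).contDiffAt.comp Xb ?_)
    cases s
    exacts [ht.neg, ht]
  have hcard : ∀ p : Fin N → Prop, Nat.card {i // p i} < N + 1 := fun p =>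
    Nat.lt_succ_of_le ((Finite.card_subtype_le p).trans_eq (Nat.card_fin N))
  have hsel : ∀ X ∈ {X | Generic X}, ∃ i, Lam d N X = g i X := by
    intro X _
    obtain ⟨I, hI, hId, h | h⟩ := exists_Lam_eq (by omega) hN X
    · exact ⟨(⟨_, hcard _⟩, ⟨I, hI, hId⟩, true), h⟩
    · exact ⟨(⟨_, hcard _⟩, ⟨I, hI, hId⟩, false), h⟩
  obtain ⟨K, ε, hε, hsub, hK⟩ := exists_ball_lipschitzOnWith_of_selection
    (isOpen_setOf_generic.mem_nhds hXb)
    (fun X hX => (continuousAt_Lam hd hN hX).continuousWithinAt) hg hsel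
  exact ⟨ball Xb ε, isOpen_ball, mem_ball_self hε, hsub, K, hK⟩

/-- a continuous selection of finitely many `C¹` functions on an open set in a
finite-dimensional normed space is locally Lipschitz; consequently the generalized cap
discrepancy `Λ` is Lipschitz continuous on a neighborhood of any generic point set. -/
theorem selection_locally_lipschitz_and_Lam_lipschitz :
    (∀ (F : Type) [NormedAddCommGroup F] [NormedSpace ℝ F] [FiniteDimensional ℝ F]
      (U : Set F) (_ : IsOpen U) (f : F → ℝ) (_ : ContinuousOn f U)
      (k : ℕ) (g : Fin k → F → ℝ) (_ : ∀ i, ContDiff ℝ 1 (g i))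
      (_ : ∀ x ∈ U, ∃ i, f x = g i x) (x : F) (_ : x ∈ U),
      ∃ K : NNReal, ∃ ε : ℝ, 0 < ε ∧ Metric.ball x ε ⊆ U ∧
        LipschitzOnWith K f (Metric.ball x ε)) ∧
    (∀ (d N : ℕ), 3 ≤ d → 0 < N → ∀ Xb : Fin N → EuclideanSpace ℝ (Fin d), Generic Xb →
      ∃ U : Set (Fin N → EuclideanSpace ℝ (Fin d)), IsOpen U ∧ Xb ∈ U ∧
        (∀ X ∈ U, Generic X) ∧ ∃ K : NNReal, LipschitzOnWith K (Lam d N) U) :=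
  ⟨fun _ _ _ _ _ hU _ hf _ _ hg hfg _ hx => exists_ball_lipschitzOnWith_of_selection
      (hU.mem_nhds hx) hf (fun i => (hg i).contDiffAt) hfg,
    fun _ _ hd hN _ hXb => hXb.exists_isOpen_lipschitzOnWith_Lam hd hN⟩
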